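/- arXiv:1706.04637 — 5 statements merged into one kernel-verified Lean document; each statement's English description precedes it below -/
import Mathlib

section
/- Assume the buyer distribution is regular, let s ∈ ℝ be a seller cost, and suppose there exists some k with φ(β_k) > s. Let k* = min{k : φ(β_k) > s}. Then: (i) for every posted price q ∈ ℝ, (q − s)·Σ_{r : β_r ≥ q} f(β_r) ≤ (β_{k*} − s)·Σ_{r=k*}^{K} f(β_r), i.e., β_{k*} is a revenue-optimal posted price for the seller; and (ii) (β_{k*} − s)·Σ_{r=k*}^{K} f(β_r) = Σ_{r=1}^{K} (φ(β_r) − s)·𝟙[φ(β_r) > s]·f(β_r). -/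
/-!
Multiplying the recursion defining the virtual value by `f(β_r)` and telescoping gives, for every
`k`, the identity `(β_k − s)·Σ_{r ≥ k} f(β_r) = Σ_{r ≥ k} (φ(β_r) − s)·f(β_r)`. A posted price `q`
sells to the buyers `β_r ≥ q`, that is to `{r ≥ k}` for some `k` with `q ≤ β_k`, so its revenue is
at most `Σ_{r ≥ k} (φ(β_r) − s)·f(β_r)`, which is bounded by the sum of the positive parts
`Σ_r (φ(β_r) − s)⁺·f(β_r)`. By regularity the set where `φ > s` is exactly `{r ≥ k*}`, so that
bound is attained at the price `β_{k*}`.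
-/

open Finset

/-- The buyer's Myerson virtual value:
`φ(β_r) = β_r − (β_{r+1} − β_r)·(Σ_{l>r} f(β_l))/f(β_r)` for `r < K-1`, and
`φ(β_{K-1}) = β_{K-1}`. -/
noncomputable def buyerVirtual (K : ℕ) (β f : Fin K → ℝ) (r : Fin K) : ℝ :=
  β r - ((if h : (r : ℕ) + 1 < K then β ⟨(r : ℕ) + 1, h⟩ else β r) - β r)
      * (∑ l ∈ Finset.Ioi r, f l) / f r

theorem Fin.Ioi_castSucc_eq_Ici_succ {n : ℕ} (i : Fin n) : Ioi i.castSucc = Ici i.succ := by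
  ext r
  simp [Fin.castSucc_lt_iff_succ_le]

section VirtualValue

variable {n : ℕ} (β f : Fin (n + 1) → ℝ)

theorem buyerVirtual_last : buyerVirtual (n + 1) β f (Fin.last n) = β (Fin.last n) := by
  rw [buyerVirtual, dif_neg (by simp)]
  ring

theorem buyerVirtual_castSucc (i : Fin n) :
    buyerVirtual (n + 1) β f i.castSucc
      = β i.castSucc - (β i.succ - β i.castSucc) * (∑ l ∈ Ici i.succ, f l) / f i.castSucc := by
  have hlt : (i.castSucc : ℕ) + 1 < n + 1 := by simp
  have hsucc : (⟨(i.castSucc : ℕ) + 1, hlt⟩ : Fin (n + 1)) = i.succ := by ext; simp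
  rw [buyerVirtual, dif_pos hlt, hsucc, Fin.Ioi_castSucc_eq_Ici_succ, mul_div_assoc]

theorem sum_Ici_buyerVirtual_sub_mul (hf : ∀ r, f r ≠ 0) (s : ℝ) (k : Fin (n + 1)) :
    ∑ r ∈ Ici k, (buyerVirtual (n + 1) β f r - s) * f r = (β k - s) * ∑ r ∈ Ici k, f r := by
  induction k using Fin.reverseInduction with
  | last =>
    rw [← Fin.top_eq_last, Ici_top, sum_singleton, sum_singleton, Fin.top_eq_last,
      buyerVirtual_last]
  | cast i ih =>
    have hf' := hf i.castSucc
    rw [← Ioi_insert, sum_insert (by simp), sum_insert (by simp),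
      Fin.Ioi_castSucc_eq_Ici_succ, ih, buyerVirtual_castSucc]
    field_simp
    ring

end VirtualValue

section PositivePart

variable {ι : Type*} [Fintype ι]

theorem sum_sub_mul_le_sum_pos_part_mul (g f : ι → ℝ) (hf : ∀ r, 0 ≤ f r) (s : ℝ)
    (t : Finset ι) :
    ∑ r ∈ t, (g r - s) * f r ≤ ∑ r, (g r - s) * (if s < g r then 1 else 0) * f r := by
  have hle : ∀ r, (g r - s) * f r ≤ (g r - s) * (if s < g r then 1 else 0) * f r := by
    intro r
    split_ifs with h
    · rw [mul_one]
    · rw [mul_zero, zero_mul]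
      exact mul_nonpos_of_nonpos_of_nonneg (by linarith) (hf r)
  have hnonneg : ∀ r, 0 ≤ (g r - s) * (if s < g r then 1 else 0) * f r := by
    intro r
    split_ifs with h
    · exact mul_nonneg (by linarith) (hf r)
    · simp
  calc ∑ r ∈ t, (g r - s) * f r
      ≤ ∑ r ∈ t, (g r - s) * (if s < g r then 1 else 0) * f r := sum_le_sum fun r _ => hle r
    _ ≤ _ := sum_le_univ_sum_of_nonneg hnonneg

variable [LinearOrder ι] [LocallyFiniteOrderTop ι]

theorem sum_pos_part_mul_eq_sum_Ici {g : ι → ℝ} (hg : Monotone g) (f : ι → ℝ) {s : ℝ}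
    {k : ι} (hk : s < g k) (hmin : ∀ r, s < g r → k ≤ r) :
    ∑ r, (g r - s) * (if s < g r then 1 else 0) * f r = ∑ r ∈ Ici k, (g r - s) * f r := by
  have hset : univ.filter (fun r => s < g r) = Ici k := by
    ext r
    simpa using ⟨hmin r, fun hkr => hk.trans_le (hg hkr)⟩
  rw [← hset, sum_filter]
  refine sum_congr rfl fun r _ => ?_
  split_ifs <;> ring

end PositivePart

theorem exists_filter_le_eq_Ici {ι α : Type*} [Fintype ι] [LinearOrder ι]
    [LocallyFiniteOrderTop ι] [Preorder α] [DecidableLE α] {β : ι → α}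
    (hβ : Monotone β) {q : α} (h : (univ.filter fun r => q ≤ β r).Nonempty) :
    ∃ k, q ≤ β k ∧ univ.filter (fun r => q ≤ β r) = Ici k := by
  refine ⟨_, (mem_filter.mp (min'_mem _ h)).2, ?_⟩
  ext r
  simp only [mem_filter, mem_univ, true_and, mem_Ici]
  exact ⟨fun hr => min'_le _ _ (by simpa using hr),
    fun hr => (mem_filter.mp (min'_mem _ h)).2.trans (hβ hr)⟩

theorem postedPrice_revenue_le_sum_pos_part {n : ℕ} {β : Fin (n + 1) → ℝ} (hβ : Monotone β)
    {f : Fin (n + 1) → ℝ} (hf : ∀ r, 0 < f r) (s q : ℝ) :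
    (q - s) * ∑ r ∈ univ.filter (fun r => q ≤ β r), f r
      ≤ ∑ r, (buyerVirtual (n + 1) β f r - s)
          * (if s < buyerVirtual (n + 1) β f r then 1 else 0) * f r := by
  have hbound := sum_sub_mul_le_sum_pos_part_mul (buyerVirtual (n + 1) β f) f
    (fun r => (hf r).le) s
  rcases (univ.filter fun r => q ≤ β r).eq_empty_or_nonempty with hempty | hne
  · simpa [hempty] using hbound ∅
  obtain ⟨k, hqk, hsupp⟩ := exists_filter_le_eq_Ici hβ hne
  rw [hsupp]
  calc (q - s) * ∑ r ∈ Ici k, f r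
      ≤ (β k - s) * ∑ r ∈ Ici k, f r :=
        mul_le_mul_of_nonneg_right (by linarith) (sum_nonneg fun r _ => (hf r).le)
    _ = ∑ r ∈ Ici k, (buyerVirtual (n + 1) β f r - s) * f r :=
        (sum_Ici_buyerVirtual_sub_mul β f (fun r => (hf r).ne') s k).symm
    _ ≤ _ := hbound _

theorem stmt_2_general (K : ℕ) (β f : Fin K → ℝ)
    (hβ : StrictMono β)
    (hf : ∀ r, 0 < f r)
    (hreg : Monotone (buyerVirtual K β f))
    (s : ℝ)
    (kstar : Fin K)
    (hks : s < buyerVirtual K β f kstar)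
    (hmin : ∀ k : Fin K, s < buyerVirtual K β f k → kstar ≤ k) :
    (∀ q : ℝ,
      (q - s) * ∑ r ∈ Finset.univ.filter (fun r => q ≤ β r), f r
        ≤ (β kstar - s) * ∑ r ∈ Finset.Ici kstar, f r)
    ∧ (β kstar - s) * ∑ r ∈ Finset.Ici kstar, f r
        = ∑ r : Fin K, (buyerVirtual K β f r - s)
            * (if s < buyerVirtual K β f r then 1 else 0) * f r := by
  obtain ⟨n, rfl⟩ : ∃ n, K = n + 1 := Nat.exists_eq_succ_of_ne_zero kstar.pos.ne'
  have hoptimal : (β kstar - s) * ∑ r ∈ Ici kstar, f r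
      = ∑ r, (buyerVirtual (n + 1) β f r - s)
          * (if s < buyerVirtual (n + 1) β f r then 1 else 0) * f r := by
    rw [← sum_Ici_buyerVirtual_sub_mul β f (fun r => (hf r).ne'),
      sum_pos_part_mul_eq_sum_Ici hreg f hks hmin]
  exact ⟨fun q => hoptimal ▸ postedPrice_revenue_le_sum_pos_part hβ.monotone hf s q, hoptimal⟩

/-- for a regular buyer distribution and a seller cost `s` such that some
virtual value exceeds `s`, with `k* = min{k : φ(β_k) > s}`:
(i) the price `β_{k*}` maximizes `(q − s)·Pr[b ≥ q]` over all posted prices `q ∈ ℝ`;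
(ii) `(β_{k*} − s)·Σ_{r ≥ k*} f(β_r) = Σ_r (φ(β_r) − s)·𝟙[φ(β_r) > s]·f(β_r)`. -/
theorem stmt_2 (K : ℕ) (β f : Fin K → ℝ)
    (hβ : StrictMono β)
    (hf : ∀ r, 0 < f r)
    (hf1 : ∑ r, f r = 1)
    (hreg : Monotone (buyerVirtual K β f))
    (s : ℝ)
    (kstar : Fin K)
    (hks : s < buyerVirtual K β f kstar)
    (hmin : ∀ k : Fin K, s < buyerVirtual K β f k → kstar ≤ k) :
    (∀ q : ℝ,
      (q - s) * ∑ r ∈ Finset.univ.filter (fun r => q ≤ β r), f r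
        ≤ (β kstar - s) * ∑ r ∈ Finset.Ici kstar, f r)
    ∧ (β kstar - s) * ∑ r ∈ Finset.Ici kstar, f r
        = ∑ r : Fin K, (buyerVirtual K β f r - s)
            * (if s < buyerVirtual K β f r then 1 else 0) * f r :=
  stmt_2_general K β f hβ hf hreg s kstar hks hmin
end

section
/- Assume the seller distribution is regular, let b ∈ ℝ be a buyer value, and suppose there exists some k with τ(α_k) < b. Let k† = max{k : τ(α_k) < b}. Then: (i) for every posted price q ∈ ℝ, (b − q)·Σ_{r : α_r ≤ q} g(α_r) ≤ (b − α_{k†})·Σ_{r=1}^{k†} g(α_r), i.e., α_{k†} is a utility-optimal posted price for the buyer; and (ii) (b − α_{k†})·Σ_{r=1}^{k†} g(α_r) = Σ_{r=1}^{K'} (b − τ(α_r))·𝟙[τ(α_r) < b]·g(α_r). -/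
open Finset

/-- The seller's Myerson virtual value:
`τ(α_1) = α_1` and `τ(α_r) = α_r + (α_r − α_{r−1})·(Σ_{l<r} g(α_l))/g(α_r)` for `r > 1`. -/
noncomputable def sellerVirtual (K' : ℕ) (α g : Fin K' → ℝ) (r : Fin K') : ℝ :=
  α r + (α r - (if 0 < (r : ℕ) then
        α ⟨(r : ℕ) - 1, Nat.lt_of_le_of_lt (Nat.sub_le _ _) r.isLt⟩ else α r))
      * (∑ l ∈ Finset.Iio r, g l) / g r

lemma key (n : ℕ) (α g : Fin (n+1) → ℝ) (hg : ∀ r, 0 < g r) (k : Fin (n+1)) :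
    α k * ∑ r ∈ Finset.Iic k, g r = ∑ r ∈ Finset.Iic k, sellerVirtual (n+1) α g r * g r := by
  induction k using Fin.induction with
  | zero =>
      rw [show Finset.Iic (0 : Fin (n+1)) = {0} by ext x; simp [Fin.le_zero_iff]]
      simp [sellerVirtual]
  | succ i ih =>
      have h2 : Finset.Iio i.succ = Finset.Iic i.castSucc := by
        ext x
        simp [Fin.lt_def, Fin.le_def, Nat.lt_succ_iff]
      have h1 : Finset.Iic i.succ = insert i.succ (Finset.Iic i.castSucc) := by
        rw [← h2]; exact (Finset.Iio_insert i.succ).symm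
      have hne : i.succ ∉ Finset.Iic i.castSucc := by
        simp [Fin.le_def, Fin.lt_def]
      rw [h1, Finset.sum_insert hne, Finset.sum_insert hne]
      have hτ : sellerVirtual (n+1) α g i.succ * g i.succ
          = α i.succ * g i.succ + (α i.succ - α i.castSucc) * ∑ r ∈ Finset.Iic i.castSucc, g r := by
        have hgne : g i.succ ≠ 0 := (hg _).ne'
        have hpos : 0 < (i.succ : ℕ) := i.succ_pos
        have hcast : (⟨(i.succ : ℕ) - 1, Nat.lt_of_le_of_lt (Nat.sub_le _ _) i.succ.isLt⟩ : Fin (n+1)) = i.castSucc := by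
          ext; simp
        simp only [sellerVirtual, if_pos hpos, hcast, h2]
        field_simp
      rw [hτ, ← ih]
      ring

lemma key2 (K' : ℕ) (α g : Fin K' → ℝ) (hg : ∀ r, 0 < g r) (b : ℝ) (k : Fin K') :
    (b - α k) * ∑ r ∈ Finset.Iic k, g r
      = ∑ r ∈ Finset.Iic k, (b - sellerVirtual K' α g r) * g r := by
  obtain ⟨n, rfl⟩ : ∃ n, K' = n + 1 := ⟨K' - 1, (Nat.succ_pred_eq_of_pos k.pos).symm⟩
  have := key n α g hg k
  rw [sub_mul, this, Finset.mul_sum, ← Finset.sum_sub_distrib]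
  congr 1; ext r; ring

lemma alpha_le_virtual (K' : ℕ) (α g : Fin K' → ℝ) (hα : StrictMono α) (hg : ∀ r, 0 < g r)
    (k : Fin K') : α k ≤ sellerVirtual K' α g k := by
  unfold sellerVirtual
  have h1 : 0 ≤ ∑ l ∈ Finset.Iio k, g l := Finset.sum_nonneg fun l _ => (hg l).le
  have h2 : 0 ≤ α k - (if 0 < (k : ℕ) then
      α ⟨(k : ℕ) - 1, Nat.lt_of_le_of_lt (Nat.sub_le _ _) k.isLt⟩ else α k) := by
    split
    · have : (⟨(k : ℕ) - 1, Nat.lt_of_le_of_lt (Nat.sub_le _ _) k.isLt⟩ : Fin K') ≤ k := by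
        simp [Fin.le_def]
      linarith [hα.monotone this]
    · simp
  nlinarith [hg k, mul_nonneg h2 h1, div_nonneg (mul_nonneg h2 h1) (hg k).le]


/-- for a regular seller distribution and a buyer value `b` such that some
virtual value is below `b`, with `k† = max{k : τ(α_k) < b}`:
(i) the price `α_{k†}` maximizes `(b − q)·Pr[s ≤ q]` over all posted prices `q ∈ ℝ`;
(ii) `(b − α_{k†})·Σ_{r ≤ k†} g(α_r) = Σ_r (b − τ(α_r))·𝟙[τ(α_r) < b]·g(α_r)`. -/
theorem stmt_3 (K' : ℕ) (α g : Fin K' → ℝ)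
    (hα : StrictMono α)
    (hg : ∀ r, 0 < g r)
    (hg1 : ∑ r, g r = 1)
    (hreg : Monotone (sellerVirtual K' α g))
    (b : ℝ)
    (kdag : Fin K')
    (hkd : sellerVirtual K' α g kdag < b)
    (hmax : ∀ k : Fin K', sellerVirtual K' α g k < b → k ≤ kdag) :
    (∀ q : ℝ,
      (b - q) * ∑ r ∈ Finset.univ.filter (fun r => α r ≤ q), g r
        ≤ (b - α kdag) * ∑ r ∈ Finset.Iic kdag, g r)
    ∧ (b - α kdag) * ∑ r ∈ Finset.Iic kdag, g r
        = ∑ r : Fin K', (b - sellerVirtual K' α g r)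
            * (if sellerVirtual K' α g r < b then 1 else 0) * g r := by
  set τ := sellerVirtual K' α g with hτ
  -- the optimum bound for any k
  have hbound : ∀ k : Fin K',
      ∑ r ∈ Finset.Iic k, (b - τ r) * g r ≤ ∑ r ∈ Finset.Iic kdag, (b - τ r) * g r := by
    intro k
    rcases le_total k kdag with h | h
    · apply Finset.sum_le_sum_of_subset_of_nonneg (Finset.Iic_subset_Iic.mpr h)
      intro r hr _
      have : τ r ≤ τ kdag := hreg (Finset.mem_Iic.mp hr)
      have : τ r < b := lt_of_le_of_lt this hkd
      exact mul_nonneg (by linarith) (hg r).le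
    · have hsub : Finset.Iic kdag ⊆ Finset.Iic k := Finset.Iic_subset_Iic.mpr h
      rw [← Finset.sum_sdiff hsub]
      have : ∑ r ∈ Finset.Iic k \ Finset.Iic kdag, (b - τ r) * g r ≤ 0 := by
        apply Finset.sum_nonpos
        intro r hr
        have hr' : ¬ r ≤ kdag := by
          simp only [Finset.mem_sdiff, Finset.mem_Iic] at hr
          exact hr.2
        have : b ≤ τ r := by
          by_contra hc
          exact hr' (hmax r (lt_of_not_ge hc))
        exact mul_nonpos_of_nonpos_of_nonneg (by linarith) (hg r).le
      linarith
  have hRHS : (b - α kdag) * ∑ r ∈ Finset.Iic kdag, g r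
      = ∑ r ∈ Finset.Iic kdag, (b - τ r) * g r := key2 K' α g hg b kdag
  have hRHSpos : 0 < (b - α kdag) * ∑ r ∈ Finset.Iic kdag, g r := by
    have h1 : α kdag < b := lt_of_le_of_lt (alpha_le_virtual K' α g hα hg kdag) hkd
    have h2 : 0 < ∑ r ∈ Finset.Iic kdag, g r :=
      Finset.sum_pos (fun r _ => hg r) ⟨kdag, Finset.mem_Iic.mpr le_rfl⟩
    exact mul_pos (by linarith) h2
  constructor
  · intro q
    by_cases hS : (Finset.univ.filter (fun r => α r ≤ q)).Nonempty
    · set k := (Finset.univ.filter (fun r => α r ≤ q)).max' hS with hk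
      have hkq : α k ≤ q := by
        have := (Finset.univ.filter (fun r => α r ≤ q)).max'_mem hS
        simpa using this
      have hSet : Finset.univ.filter (fun r => α r ≤ q) = Finset.Iic k := by
        ext r
        simp only [Finset.mem_filter, Finset.mem_univ, true_and, Finset.mem_Iic]
        constructor
        · intro hr
          exact Finset.le_max' _ r (by simpa using hr)
        · intro hr
          exact le_trans (hα.monotone hr) hkq
      rw [hSet]
      have hGk : 0 < ∑ r ∈ Finset.Iic k, g r :=
        Finset.sum_pos (fun r _ => hg r) ⟨k, Finset.mem_Iic.mpr le_rfl⟩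
      have step1 : (b - q) * ∑ r ∈ Finset.Iic k, g r ≤ (b - α k) * ∑ r ∈ Finset.Iic k, g r := by
        apply mul_le_mul_of_nonneg_right (by linarith) hGk.le
      calc (b - q) * ∑ r ∈ Finset.Iic k, g r
          ≤ (b - α k) * ∑ r ∈ Finset.Iic k, g r := step1
        _ = ∑ r ∈ Finset.Iic k, (b - τ r) * g r := key2 K' α g hg b k
        _ ≤ ∑ r ∈ Finset.Iic kdag, (b - τ r) * g r := hbound k
        _ = (b - α kdag) * ∑ r ∈ Finset.Iic kdag, g r := hRHS.symm
    · rw [Finset.not_nonempty_iff_eq_empty.mp hS]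
      simpa using hRHSpos.le
  · rw [hRHS]
    rw [show (∑ r : Fin K', (b - τ r) * (if τ r < b then 1 else 0) * g r)
        = ∑ r ∈ Finset.univ.filter (fun r => τ r < b), (b - τ r) * g r by
      rw [Finset.sum_filter]
      congr 1; ext r
      split <;> simp]
    congr 1
    ext r
    simp only [Finset.mem_filter, Finset.mem_univ, true_and, Finset.mem_Iic]
    constructor
    · intro hr; exact lt_of_le_of_lt (hreg hr) hkd
    · intro hr; exact hmax r hr
end

section
/- Let λ = (λ^B, λ^S) be nonnegative dual variables. Then sup over implementable allocations x and balanced payments p of L(λ, x, p) is finite if and only if there exists a real number α ≥ 0 such that for every buyer i and every b_i ∈ T^B_i, (1/f_i(b_i))·(Σ_{b'_i ∈ T^B_i ∪ {∅}} λ^B_i(b_i, b'_i) − Σ_{b'_i ∈ T^B_i} λ^B_i(b'_i, b_i)) = α, and for every seller j and every s_j ∈ T^S_j, (1/g_j(s_j))·(Σ_{s'_j ∈ T^S_j ∪ {∅}} λ^S_j(s_j, s'_j) − Σ_{s'_j ∈ T^S_j} λ^S_j(s'_j, s_j)) = α. -/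
open Finset

namespace Stmt4

variable {n m : ℕ} {K : Fin n → ℕ} {K' : Fin m → ℕ}

/-- A buyer type profile: each buyer `i` has one of `K i` possible types. -/
abbrev ProfileB (K : Fin n → ℕ) := ∀ i, Fin (K i)

/-- A seller type profile. -/
abbrev ProfileS (K' : Fin m → ℕ) := ∀ j, Fin (K' j)

/-- Expectation of `h` over the independent product of the buyers' distributions `f`
and the sellers' distributions `g`. -/
def Ex (f : ∀ i, Fin (K i) → ℝ) (g : ∀ j, Fin (K' j) → ℝ)
    (h : ProfileB K → ProfileS K' → ℝ) : ℝ :=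
  ∑ b : ProfileB K, ∑ s : ProfileS K',
    ((∏ i, f i (b i)) * ∏ j, g j (s j)) * h b s

/-- `x` is implementable w.r.t. the feasibility constraint `F`: at every type profile the
vector `(x_{ij}(b,s))_{ij}` is a convex combination of indicator vectors of matchings in `F`. -/
def Implementable (F : Set (Finset (Fin n × Fin m)))
    (x : ProfileB K → ProfileS K' → Fin n × Fin m → ℝ) : Prop :=
  ∀ b s, ∃ γ : Finset (Fin n × Fin m) → ℝ,
    (∀ M, 0 ≤ γ M) ∧ (∀ M, γ M ≠ 0 → M ∈ F) ∧ (∑ M, γ M = 1) ∧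
    (∀ e, x b s e = ∑ M, γ M * (if e ∈ M then 1 else 0))

/-- `U^B_i(t, r)`: interim utility of buyer `i` of true type `t` reporting `r`, where
`r = none` is the non-participation report `∅` (allocation and payment are `0` there). -/
def utilB (vB : ∀ i, Fin (K i) → ℝ)
    (f : ∀ i, Fin (K i) → ℝ) (g : ∀ j, Fin (K' j) → ℝ)
    (x : ProfileB K → ProfileS K' → Fin n × Fin m → ℝ)
    (pB : Fin n → ProfileB K → ProfileS K' → ℝ)
    (i : Fin n) (t : Fin (K i)) (r : Option (Fin (K i))) : ℝ :=
  Ex f g (fun b s => Option.elim r 0 (fun r' =>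
    vB i t * (∑ j, x (Function.update b i r') s (i, j))
      - pB i (Function.update b i r') s))

/-- `U^S_j(t, r)`: interim utility of seller `j` of true type `t` reporting `r`. -/
def utilS (vS : ∀ j, Fin (K' j) → ℝ)
    (f : ∀ i, Fin (K i) → ℝ) (g : ∀ j, Fin (K' j) → ℝ)
    (x : ProfileB K → ProfileS K' → Fin n × Fin m → ℝ)
    (pS : Fin m → ProfileB K → ProfileS K' → ℝ)
    (j : Fin m) (t : Fin (K' j)) (r : Option (Fin (K' j))) : ℝ :=
  Ex f g (fun b s => Option.elim r 0 (fun r' =>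
    pS j b (Function.update s j r')
      - vS j t * (∑ i, x b (Function.update s j r') (i, j))))

/-- The partial Lagrangian `L(λ, x, p)`. -/
def Lagr (vB : ∀ i, Fin (K i) → ℝ) (vS : ∀ j, Fin (K' j) → ℝ)
    (f : ∀ i, Fin (K i) → ℝ) (g : ∀ j, Fin (K' j) → ℝ)
    (lamB : ∀ i, Fin (K i) → Option (Fin (K i)) → ℝ)
    (lamS : ∀ j, Fin (K' j) → Option (Fin (K' j)) → ℝ)
    (x : ProfileB K → ProfileS K' → Fin n × Fin m → ℝ)
    (pB : Fin n → ProfileB K → ProfileS K' → ℝ)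
    (pS : Fin m → ProfileB K → ProfileS K' → ℝ) : ℝ :=
  Ex f g (fun b s => ∑ i, ∑ j, x b s (i, j) * (vB i (b i) - vS j (s j)))
    + (∑ i, ∑ t : Fin (K i), ∑ r : Option (Fin (K i)), lamB i t r *
        (utilB vB f g x pB i t (some t) - utilB vB f g x pB i t r))
    + (∑ j, ∑ t : Fin (K' j), ∑ r : Option (Fin (K' j)), lamS j t r *
        (utilS vS f g x pS j t (some t) - utilS vS f g x pS j t r))

/-! The Lagrangian is jointly linear in the allocation and the payments, so
`L(x, p) = L(x, 0) + L(0, p)`, and `L(x, 0)` is bounded because implementable allocations take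
values in `[0, 1]`. Exchanging a reported type with the true one (a change of variables in the
product of the type distributions) gives, with `d` the net outflow of dual mass at a type,
`L(0, p) = E[Σ_j d^S_j(s_j)/g_j(s_j) · p^S_j − Σ_i d^B_i(b_i)/f_i(b_i) · p^B_i]`.
If all these ratios equal `α`, this is `α · E[Σ_j p^S_j − Σ_i p^B_i] = 0` for balanced payments.
Conversely `L(0, ·)` is linear on balanced payments, so a bound forces it to vanish; a unit payment
to one buyer and one seller at a single type profile then shows that all ratios agree, and their
common value is `≥ 0` because `Σ_t d^B_i(t) = Σ_t λ^B_i(t, ∅)`. -/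

section PiUpdate

variable {ι : Type*} [Fintype ι] [DecidableEq ι] {κ : ι → Type*} [∀ i, Fintype (κ i)]

theorem sum_sum_update_swap {M : Type*} [AddCommMonoid M] (i : ι) (Φ : (∀ j, κ j) → κ i → M) :
    ∑ b, ∑ a, Φ (Function.update b i a) (b i) = ∑ b, ∑ a, Φ b a := by
  have hinv : Function.Involutive fun q : (∀ j, κ j) × κ i => (Function.update q.1 i q.2, q.1 i) :=
    fun q => by simp
  simp only [← Fintype.sum_prod_type']
  exact Fintype.sum_bijective _ hinv.bijective _ _ fun _ => rfl

theorem sum_prod_mul_ite_eq [∀ i, DecidableEq (κ i)] (p : ∀ j, κ j → ℝ) (i : ι)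
    (hp : ∑ a, p i a = 1) (u : κ i) (H : (∀ j, κ j) → ℝ) :
    ∑ b, (∏ k, p k (b k)) * (if b i = u then H b else 0)
      = p i u * ∑ b, (∏ k, p k (b k)) * H (Function.update b i u) := by
  set W : (∀ j, κ j) → ℝ := fun b => ∏ k ∈ univ.erase i, p k (b k)
  have hprod : ∀ b, ∏ k, p k (b k) = p i (b i) * W b := fun b =>
    (mul_prod_erase univ (fun k => p k (b k)) (mem_univ i)).symm
  have hW : ∀ b a, W (Function.update b i a) = W b := fun b a =>
    prod_congr rfl fun k hk => by rw [Function.update_of_ne (ne_of_mem_erase hk)]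
  -- the involution `(b, a) ↦ (update b i a, b i)` trades the weight `p i (b i)` for `p i a`
  have hswap := sum_sum_update_swap i
    fun b a => p i a * (p i (b i) * W b) * (if a = u then H (Function.update b i a) else 0)
  simp only [Function.update_self, Function.update_idem, Function.update_eq_self, hW,
    mul_ite, mul_zero, sum_ite_eq', mem_univ, if_true] at hswap
  simp only [hprod, mul_sum]
  refine (sum_congr rfl fun b _ => ?_).trans (hswap.trans (sum_congr rfl fun b _ => by ring))
  split_ifs
  · simp_rw [← sum_mul, ← mul_sum, ← sum_mul, hp]
    ring
  · simp

end PiUpdate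

section NetOutflow

variable {κ : Type*} [Fintype κ]

def netOutflow (lam : κ → Option κ → ℝ) (u : κ) : ℝ :=
  (∑ r, lam u r) - ∑ t, lam t (some u)

theorem sum_mul_sub_elim_eq_sum_netOutflow_mul (lam : κ → Option κ → ℝ) (V : κ → ℝ) :
    ∑ t, ∑ r, lam t r * (V t - r.elim 0 V) = ∑ u, netOutflow lam u * V u := by
  have hrow : ∀ t, ∑ r, lam t r * (V t - r.elim 0 V)
      = (∑ r, lam t r) * V t - ∑ u, lam t (some u) * V u := by
    intro t
    simp only [Fintype.sum_option, Option.elim, mul_sub, sum_sub_distrib, add_mul, sum_mul]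
    ring
  simp only [hrow, netOutflow, sub_mul, sum_sub_distrib, sum_mul]
  rw [sum_comm (f := fun t u => lam t (some u) * V u)]

theorem sum_netOutflow (lam : κ → Option κ → ℝ) : ∑ u, netOutflow lam u = ∑ u, lam u none := by
  simp only [netOutflow, sum_sub_distrib, Fintype.sum_option, sum_add_distrib]
  rw [sum_comm]
  ring

theorem nonneg_of_netOutflow_div_eq {lam : κ → Option κ → ℝ} {p : κ → ℝ} {α : ℝ}
    (hlam : ∀ t, 0 ≤ lam t none) (hp : ∀ t, p t ≠ 0) (hp1 : ∑ t, p t = 1)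
    (h : ∀ t, netOutflow lam t / p t = α) : 0 ≤ α := by
  have hα : α = ∑ u, lam u none := by
    rw [← sum_netOutflow, ← mul_one α, ← hp1, mul_sum]
    exact sum_congr rfl fun t _ => by rw [← h t, div_mul_cancel₀ _ (hp t)]
  exact hα ▸ sum_nonneg fun t _ => hlam t

end NetOutflow

section Expectation

variable {f : ∀ i, Fin (K i) → ℝ} {g : ∀ j, Fin (K' j) → ℝ}

theorem Ex_eq_sum_buyer (h : ProfileB K → ProfileS K' → ℝ) :
    Ex f g h = ∑ b : ProfileB K, (∏ i, f i (b i)) *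
      ∑ s : ProfileS K', (∏ j, g j (s j)) * h b s := by
  simp only [Ex, mul_sum, mul_assoc]

theorem Ex_eq_sum_seller (h : ProfileB K → ProfileS K' → ℝ) :
    Ex f g h = ∑ s : ProfileS K', (∏ j, g j (s j)) *
      ∑ b : ProfileB K, (∏ i, f i (b i)) * h b s := by
  rw [Ex, sum_comm]
  simp only [mul_sum]
  exact sum_congr rfl fun _ _ => sum_congr rfl fun _ _ => by ring

theorem Ex_zero : Ex f g (fun _ _ => 0) = 0 := by
  simp [Ex]

theorem Ex_add (h h' : ProfileB K → ProfileS K' → ℝ) :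
    Ex f g (fun b s => h b s + h' b s) = Ex f g h + Ex f g h' := by
  simp only [Ex, mul_add, sum_add_distrib]

theorem Ex_neg (h : ProfileB K → ProfileS K' → ℝ) :
    Ex f g (fun b s => -h b s) = -Ex f g h := by
  simp only [Ex, mul_neg, sum_neg_distrib]

theorem Ex_sub (h h' : ProfileB K → ProfileS K' → ℝ) :
    Ex f g (fun b s => h b s - h' b s) = Ex f g h - Ex f g h' := by
  simp only [Ex, mul_sub, sum_sub_distrib]

theorem Ex_const_mul (c : ℝ) (h : ProfileB K → ProfileS K' → ℝ) :
    Ex f g (fun b s => c * h b s) = c * Ex f g h := by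
  simp only [Ex, mul_sum, mul_left_comm]

theorem Ex_sum {α : Type*} (t : Finset α) (h : α → ProfileB K → ProfileS K' → ℝ) :
    Ex f g (fun b s => ∑ a ∈ t, h a b s) = ∑ a ∈ t, Ex f g (h a) := by
  simp only [Ex, mul_sum]
  exact (sum_congr rfl fun _ _ => sum_comm).trans sum_comm

theorem Ex_ite_eq (b₀ : ProfileB K) (s₀ : ProfileS K') (h : ProfileB K → ProfileS K' → ℝ) :
    Ex f g (fun b s => if b = b₀ ∧ s = s₀ then h b s else 0)
      = ((∏ i, f i (b₀ i)) * ∏ j, g j (s₀ j)) * h b₀ s₀ := by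
  simp [Ex, ite_and, mul_ite]

theorem Ex_mono (hf : ∀ i t, 0 ≤ f i t) (hg : ∀ j t, 0 ≤ g j t)
    {h h' : ProfileB K → ProfileS K' → ℝ} (hle : ∀ b s, h b s ≤ h' b s) :
    Ex f g h ≤ Ex f g h' :=
  sum_le_sum fun b _ => sum_le_sum fun s _ => mul_le_mul_of_nonneg_left (hle b s)
    (mul_nonneg (prod_nonneg fun i _ => hf i _) (prod_nonneg fun j _ => hg j _))

theorem abs_Ex_le (hf : ∀ i t, 0 ≤ f i t) (hg : ∀ j t, 0 ≤ g j t)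
    (h : ProfileB K → ProfileS K' → ℝ) : |Ex f g h| ≤ Ex f g (fun b s => |h b s|) := by
  rw [abs_le, ← Ex_neg]
  exact ⟨Ex_mono hf hg fun b s => neg_abs_le _, Ex_mono hf hg fun b s => le_abs_self _⟩

theorem Ex_ite_buyer_eq {i : Fin n} (hf1 : ∑ t, f i t = 1) (u : Fin (K i))
    (h : ProfileB K → ProfileS K' → ℝ) :
    Ex f g (fun b s => if b i = u then h b s else 0)
      = f i u * Ex f g (fun b s => h (Function.update b i u) s) := by
  rw [Ex_eq_sum_buyer, Ex_eq_sum_buyer, ← sum_prod_mul_ite_eq f i hf1 u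
    fun b => ∑ s : ProfileS K', (∏ j, g j (s j)) * h b s]
  refine sum_congr rfl fun b _ => ?_
  split_ifs <;> simp

theorem Ex_ite_seller_eq {j : Fin m} (hg1 : ∑ t, g j t = 1) (u : Fin (K' j))
    (h : ProfileB K → ProfileS K' → ℝ) :
    Ex f g (fun b s => if s j = u then h b s else 0)
      = g j u * Ex f g (fun b s => h b (Function.update s j u)) := by
  rw [Ex_eq_sum_seller, Ex_eq_sum_seller, ← sum_prod_mul_ite_eq g j hg1 u
    fun s => ∑ b : ProfileB K, (∏ i, f i (b i)) * h b s]
  refine sum_congr rfl fun s _ => ?_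
  split_ifs <;> simp

end Expectation

section Lagrangian

variable {f : ∀ i, Fin (K i) → ℝ} {g : ∀ j, Fin (K' j) → ℝ}
  (vB : ∀ i, Fin (K i) → ℝ) (vS : ∀ j, Fin (K' j) → ℝ)
  (lamB : ∀ i, Fin (K i) → Option (Fin (K i)) → ℝ)
  (lamS : ∀ j, Fin (K' j) → Option (Fin (K' j)) → ℝ)

theorem utilB_eq_add (x : ProfileB K → ProfileS K' → Fin n × Fin m → ℝ)
    (pB : Fin n → ProfileB K → ProfileS K' → ℝ) (i : Fin n) (t : Fin (K i))
    (r : Option (Fin (K i))) :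
    utilB vB f g x pB i t r = utilB vB f g x 0 i t r + utilB vB f g 0 pB i t r := by
  rw [utilB, utilB, utilB, ← Ex_add]
  congr 1
  funext b s
  cases r <;> simp
  ring

theorem utilS_eq_add (x : ProfileB K → ProfileS K' → Fin n × Fin m → ℝ)
    (pS : Fin m → ProfileB K → ProfileS K' → ℝ) (j : Fin m) (t : Fin (K' j))
    (r : Option (Fin (K' j))) :
    utilS vS f g x pS j t r = utilS vS f g x 0 j t r + utilS vS f g 0 pS j t r := by
  rw [utilS, utilS, utilS, ← Ex_add]
  congr 1
  funext b s
  cases r <;> simp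
  ring

theorem Lagr_eq_add (x : ProfileB K → ProfileS K' → Fin n × Fin m → ℝ)
    (pB : Fin n → ProfileB K → ProfileS K' → ℝ) (pS : Fin m → ProfileB K → ProfileS K' → ℝ) :
    Lagr vB vS f g lamB lamS x pB pS
      = Lagr vB vS f g lamB lamS x 0 0 + Lagr vB vS f g lamB lamS 0 pB pS := by
  simp only [Lagr, utilB_eq_add vB x pB, utilS_eq_add vS x pS, add_sub_add_comm, mul_add,
    sum_add_distrib, Pi.zero_apply, zero_mul, sum_const_zero, Ex_zero]
  ring

theorem utilB_zero_alloc (pB : Fin n → ProfileB K → ProfileS K' → ℝ) (i : Fin n)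
    (t : Fin (K i)) (r : Option (Fin (K i))) :
    utilB vB f g 0 pB i t r
      = r.elim 0 fun u => -Ex f g (fun b s => pB i (Function.update b i u) s) := by
  cases r with
  | none => exact Ex_zero
  | some u =>
    simp only [utilB, Option.elim, Pi.zero_apply, sum_const_zero, mul_zero, zero_sub]
    exact Ex_neg _

theorem utilS_zero_alloc (pS : Fin m → ProfileB K → ProfileS K' → ℝ) (j : Fin m)
    (t : Fin (K' j)) (r : Option (Fin (K' j))) :
    utilS vS f g 0 pS j t r
      = r.elim 0 fun u => Ex f g (fun b s => pS j b (Function.update s j u)) := by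
  cases r with
  | none => exact Ex_zero
  | some u => simp [utilS]

theorem sum_lam_utilB_zero_alloc {i : Fin n} (hf0 : ∀ t, f i t ≠ 0) (hf1 : ∑ t, f i t = 1)
    (pB : Fin n → ProfileB K → ProfileS K' → ℝ) :
    ∑ t, ∑ r, lamB i t r * (utilB vB f g 0 pB i t (some t) - utilB vB f g 0 pB i t r)
      = -Ex f g (fun b s => netOutflow (lamB i) (b i) / f i (b i) * pB i b s) := by
  set V : Fin (K i) → ℝ := fun u => -Ex f g (fun b s => pB i (Function.update b i u) s)
  calc _ = ∑ t, ∑ r, lamB i t r * (V t - r.elim 0 V) := by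
          simp only [utilB_zero_alloc]; rfl
    _ = ∑ u, netOutflow (lamB i) u * V u := sum_mul_sub_elim_eq_sum_netOutflow_mul _ _
    _ = -∑ u, Ex f g (fun b s =>
          netOutflow (lamB i) u / f i u * if b i = u then pB i b s else 0) := by
        simp only [V, Ex_const_mul, Ex_ite_buyer_eq hf1, mul_neg, sum_neg_distrib]
        exact congrArg _ (sum_congr rfl fun u _ => by field_simp [hf0 u])
    _ = _ := by
        rw [← Ex_sum]
        simp [mul_ite, sum_ite_eq]

theorem sum_lam_utilS_zero_alloc {j : Fin m} (hg0 : ∀ t, g j t ≠ 0) (hg1 : ∑ t, g j t = 1)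
    (pS : Fin m → ProfileB K → ProfileS K' → ℝ) :
    ∑ t, ∑ r, lamS j t r * (utilS vS f g 0 pS j t (some t) - utilS vS f g 0 pS j t r)
      = Ex f g (fun b s => netOutflow (lamS j) (s j) / g j (s j) * pS j b s) := by
  set V : Fin (K' j) → ℝ := fun u => Ex f g (fun b s => pS j b (Function.update s j u))
  calc _ = ∑ t, ∑ r, lamS j t r * (V t - r.elim 0 V) := by
          simp only [utilS_zero_alloc]; rfl
    _ = ∑ u, netOutflow (lamS j) u * V u := sum_mul_sub_elim_eq_sum_netOutflow_mul _ _
    _ = ∑ u, Ex f g (fun b s =>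
          netOutflow (lamS j) u / g j u * if s j = u then pS j b s else 0) := by
        simp only [V, Ex_const_mul, Ex_ite_seller_eq hg1]
        exact sum_congr rfl fun u _ => by field_simp [hg0 u]
    _ = _ := by
        rw [← Ex_sum]
        simp [mul_ite, sum_ite_eq]


theorem Lagr_zero_alloc (hf0 : ∀ i t, f i t ≠ 0) (hf1 : ∀ i, ∑ t, f i t = 1)
    (hg0 : ∀ j t, g j t ≠ 0) (hg1 : ∀ j, ∑ t, g j t = 1)
    (pB : Fin n → ProfileB K → ProfileS K' → ℝ) (pS : Fin m → ProfileB K → ProfileS K' → ℝ) :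
    Lagr vB vS f g lamB lamS 0 pB pS
      = Ex f g (fun b s => ∑ j, netOutflow (lamS j) (s j) / g j (s j) * pS j b s
          - ∑ i, netOutflow (lamB i) (b i) / f i (b i) * pB i b s) := by
  simp only [Lagr, sum_lam_utilB_zero_alloc vB lamB (hf0 _) (hf1 _),
    sum_lam_utilS_zero_alloc vS lamS (hg0 _) (hg1 _), Pi.zero_apply, zero_mul, sum_const_zero,
    Ex_zero, Ex_sub, Ex_sum, sum_neg_distrib]
  ring

theorem Lagr_zero_alloc_const_mul (hf0 : ∀ i t, f i t ≠ 0) (hf1 : ∀ i, ∑ t, f i t = 1)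
    (hg0 : ∀ j t, g j t ≠ 0) (hg1 : ∀ j, ∑ t, g j t = 1)
    (pB : Fin n → ProfileB K → ProfileS K' → ℝ) (pS : Fin m → ProfileB K → ProfileS K' → ℝ)
    (c : ℝ) :
    Lagr vB vS f g lamB lamS 0 (fun i b s => c * pB i b s) (fun j b s => c * pS j b s)
      = c * Lagr vB vS f g lamB lamS 0 pB pS := by
  simp only [Lagr_zero_alloc vB vS lamB lamS hf0 hf1 hg0 hg1, ← Ex_const_mul, mul_sub, mul_sum,
    mul_left_comm c]

end Lagrangian

def Balanced (pB : Fin n → ProfileB K → ProfileS K' → ℝ)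
    (pS : Fin m → ProfileB K → ProfileS K' → ℝ) : Prop :=
  ∀ b s, ∑ i, pB i b s = ∑ j, pS j b s

theorem Balanced.const_mul {pB : Fin n → ProfileB K → ProfileS K' → ℝ}
    {pS : Fin m → ProfileB K → ProfileS K' → ℝ} (h : Balanced pB pS) (c : ℝ) :
    Balanced (fun i b s => c * pB i b s) (fun j b s => c * pS j b s) := fun b s => by
  simp only [← mul_sum, h b s]

theorem Implementable.mem_Icc {F : Set (Finset (Fin n × Fin m))}
    {x : ProfileB K → ProfileS K' → Fin n × Fin m → ℝ} (hx : Implementable F x)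
    (b : ProfileB K) (s : ProfileS K') (e : Fin n × Fin m) : x b s e ∈ Set.Icc 0 1 := by
  obtain ⟨γ, hγ0, -, hγ1, hxγ⟩ := hx b s
  have hind : ∀ M : Finset (Fin n × Fin m), (if e ∈ M then (1 : ℝ) else 0) ∈ Set.Icc 0 1 :=
    fun M => by split_ifs <;> simp
  rw [hxγ e]
  exact ⟨sum_nonneg fun M _ => mul_nonneg (hγ0 M) (hind M).1,
    (sum_le_sum fun M _ => mul_le_of_le_one_right (hγ0 M) (hind M).2).trans hγ1.le⟩

theorem exists_implementable {F : Set (Finset (Fin n × Fin m))} (hF : F.Nonempty) :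
    ∃ x : ProfileB K → ProfileS K' → Fin n × Fin m → ℝ, Implementable F x := by
  obtain ⟨M₀, hM₀⟩ := hF
  refine ⟨fun _ _ e => if e ∈ M₀ then 1 else 0, fun _ _ =>
    ⟨fun M => if M = M₀ then 1 else 0, fun M => ?_, fun M hM => ?_, by simp, fun e => ?_⟩⟩
  · dsimp only
    split_ifs <;> norm_num
  · by_cases h : M = M₀
    · exact h ▸ hM₀
    · simp [h] at hM
  · rw [sum_eq_single M₀ (fun M _ hM => by simp [hM]) (by simp)]
    simp

section Bounds

variable {f : ∀ i, Fin (K i) → ℝ} {g : ∀ j, Fin (K' j) → ℝ}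
  {x : ProfileB K → ProfileS K' → Fin n × Fin m → ℝ}

theorem abs_utilB_zero_payment_le (hf : ∀ i t, 0 ≤ f i t) (hg : ∀ j t, 0 ≤ g j t)
    (hx : ∀ b s e, x b s e ∈ Set.Icc 0 1) (vB : ∀ i, Fin (K i) → ℝ) (i : Fin n) (t : Fin (K i))
    (r : Option (Fin (K i))) :
    |utilB vB f g x 0 i t r| ≤ Ex f g (fun _ _ => |vB i t| * m) := by
  refine (abs_Ex_le hf hg _).trans (Ex_mono hf hg fun b s => ?_)
  cases r with
  | none => simp only [Option.elim, abs_zero]; positivity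
  | some u =>
    have hsum : ∑ j, x (Function.update b i u) s (i, j) ∈ Set.Icc 0 (m : ℝ) :=
      ⟨sum_nonneg fun j _ => (hx _ _ _).1,
        (sum_le_sum fun j _ => (hx _ _ _).2).trans (by simp)⟩
    simp only [Option.elim, Pi.zero_apply, sub_zero, abs_mul, abs_of_nonneg hsum.1]
    exact mul_le_mul_of_nonneg_left hsum.2 (abs_nonneg _)


theorem abs_utilS_zero_payment_le (hf : ∀ i t, 0 ≤ f i t) (hg : ∀ j t, 0 ≤ g j t)
    (hx : ∀ b s e, x b s e ∈ Set.Icc 0 1) (vS : ∀ j, Fin (K' j) → ℝ) (j : Fin m)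
    (t : Fin (K' j)) (r : Option (Fin (K' j))) :
    |utilS vS f g x 0 j t r| ≤ Ex f g (fun _ _ => |vS j t| * n) := by
  refine (abs_Ex_le hf hg _).trans (Ex_mono hf hg fun b s => ?_)
  cases r with
  | none => simp only [Option.elim, abs_zero]; positivity
  | some u =>
    have hsum : ∑ i, x b (Function.update s j u) (i, j) ∈ Set.Icc 0 (n : ℝ) :=
      ⟨sum_nonneg fun i _ => (hx _ _ _).1,
        (sum_le_sum fun i _ => (hx _ _ _).2).trans (by simp)⟩
    simp only [Option.elim, Pi.zero_apply, zero_sub, abs_neg, abs_mul, abs_of_nonneg hsum.1]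
    exact mul_le_mul_of_nonneg_left hsum.2 (abs_nonneg _)

theorem mul_le_abs_of_mem_Icc {a : ℝ} (ha : a ∈ Set.Icc (0 : ℝ) 1) (c : ℝ) : a * c ≤ |c| :=
  (mul_le_mul_of_nonneg_left (le_abs_self c) ha.1).trans
    (mul_le_of_le_one_left (abs_nonneg c) ha.2)

theorem mul_sub_le_abs_mul {l a b M : ℝ} (ha : |a| ≤ M) (hb : |b| ≤ M) :
    l * (a - b) ≤ |l| * (2 * M) :=
  calc l * (a - b) ≤ |l| * |a - b| := (le_abs_self _).trans (abs_mul l _).le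
    _ ≤ |l| * (2 * M) :=
      mul_le_mul_of_nonneg_left (by linarith [abs_sub a b]) (abs_nonneg l)

theorem exists_Lagr_zero_payment_le (hf : ∀ i t, 0 ≤ f i t) (hg : ∀ j t, 0 ≤ g j t)
    (vB : ∀ i, Fin (K i) → ℝ) (vS : ∀ j, Fin (K' j) → ℝ)
    (lamB : ∀ i, Fin (K i) → Option (Fin (K i)) → ℝ)
    (lamS : ∀ j, Fin (K' j) → Option (Fin (K' j)) → ℝ) :
    ∃ C, ∀ x : ProfileB K → ProfileS K' → Fin n × Fin m → ℝ,
      (∀ b s e, x b s e ∈ Set.Icc 0 1) → Lagr vB vS f g lamB lamS x 0 0 ≤ C :=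
  ⟨Ex f g (fun b s => ∑ i, ∑ j, |vB i (b i) - vS j (s j)|)
      + (∑ i, ∑ t, ∑ r, |lamB i t r| * (2 * Ex f g (fun _ _ => |vB i t| * m)))
      + ∑ j, ∑ t, ∑ r, |lamS j t r| * (2 * Ex f g (fun _ _ => |vS j t| * n)),
    fun _ hx => add_le_add (add_le_add
      (Ex_mono hf hg fun b s => sum_le_sum fun _ _ => sum_le_sum fun _ _ =>
        mul_le_abs_of_mem_Icc (hx b s _) _)
      (sum_le_sum fun i _ => sum_le_sum fun t _ => sum_le_sum fun r _ =>
        mul_sub_le_abs_mul (abs_utilB_zero_payment_le hf hg hx vB i t _)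
          (abs_utilB_zero_payment_le hf hg hx vB i t r)))
      (sum_le_sum fun j _ => sum_le_sum fun t _ => sum_le_sum fun r _ =>
        mul_sub_le_abs_mul (abs_utilS_zero_payment_le hf hg hx vS j t _)
          (abs_utilS_zero_payment_le hf hg hx vS j t r))⟩

end Bounds

theorem eq_zero_of_forall_mul_le {a C : ℝ} (h : ∀ c, c * a ≤ C) : a = 0 := by
  by_contra ha
  have := h ((C + 1) / a)
  rw [div_mul_cancel₀ _ ha] at this
  linarith

section Duality

variable {f : ∀ i, Fin (K i) → ℝ} {g : ∀ j, Fin (K' j) → ℝ}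
  {vB : ∀ i, Fin (K i) → ℝ} {vS : ∀ j, Fin (K' j) → ℝ}
  {lamB : ∀ i, Fin (K i) → Option (Fin (K i)) → ℝ}
  {lamS : ∀ j, Fin (K' j) → Option (Fin (K' j)) → ℝ}
  {pB : Fin n → ProfileB K → ProfileS K' → ℝ} {pS : Fin m → ProfileB K → ProfileS K' → ℝ}

theorem Lagr_zero_alloc_eq_zero_of_le (hf0 : ∀ i t, f i t ≠ 0) (hf1 : ∀ i, ∑ t, f i t = 1)
    (hg0 : ∀ j t, g j t ≠ 0) (hg1 : ∀ j, ∑ t, g j t = 1)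
    {x₀ : ProfileB K → ProfileS K' → Fin n × Fin m → ℝ} {C : ℝ}
    (hC : ∀ pB pS, Balanced pB pS → Lagr vB vS f g lamB lamS x₀ pB pS ≤ C)
    (hbal : Balanced pB pS) : Lagr vB vS f g lamB lamS 0 pB pS = 0 :=
  eq_zero_of_forall_mul_le (C := C - Lagr vB vS f g lamB lamS x₀ 0 0) fun c => by
    have := hC _ _ (hbal.const_mul c)
    rw [Lagr_eq_add, Lagr_zero_alloc_const_mul vB vS lamB lamS hf0 hf1 hg0 hg1] at this
    linarith

theorem Lagr_zero_alloc_eq_zero (hf0 : ∀ i t, f i t ≠ 0) (hf1 : ∀ i, ∑ t, f i t = 1)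
    (hg0 : ∀ j t, g j t ≠ 0) (hg1 : ∀ j, ∑ t, g j t = 1) {α : ℝ}
    (hB : ∀ i t, netOutflow (lamB i) t / f i t = α)
    (hS : ∀ j t, netOutflow (lamS j) t / g j t = α) (hbal : Balanced pB pS) :
    Lagr vB vS f g lamB lamS 0 pB pS = 0 := by
  rw [Lagr_zero_alloc vB vS lamB lamS hf0 hf1 hg0 hg1]
  simp only [hB, hS, ← mul_sum, show ∀ b s, ∑ i, pB i b s = ∑ j, pS j b s from hbal, sub_self]
  exact Ex_zero

theorem eq_of_forall_balanced_Ex_eq_zero (hK : ∀ i, 0 < K i) (hK' : ∀ j, 0 < K' j)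
    (hf : ∀ i t, 0 < f i t) (hg : ∀ j t, 0 < g j t)
    (β : ∀ i, Fin (K i) → ℝ) (σ : ∀ j, Fin (K' j) → ℝ)
    (h : ∀ pB pS, Balanced pB pS →
      Ex f g (fun b s => ∑ j, σ j (s j) * pS j b s - ∑ i, β i (b i) * pB i b s) = 0)
    (i : Fin n) (u : Fin (K i)) (j : Fin m) (w : Fin (K' j)) : β i u = σ j w := by
  set b₀ : ProfileB K := Function.update (fun i => ⟨0, hK i⟩) i u
  set s₀ : ProfileS K' := Function.update (fun j => ⟨0, hK' j⟩) j w
  let δ : ProfileB K → ProfileS K' → ℝ := fun b s => if b = b₀ ∧ s = s₀ then 1 else 0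
  have hδ := h (fun i' b s => if i' = i then δ b s else 0)
    (fun j' b s => if j' = j then δ b s else 0) fun b s => by simp
  have hpoint : ∀ b s, (∑ j', σ j' (s j') * (if j' = j then δ b s else 0)
      - ∑ i', β i' (b i') * (if i' = i then δ b s else 0))
      = if b = b₀ ∧ s = s₀ then σ j (s j) - β i (b i) else 0 := fun b s => by
    simp only [δ, mul_ite, mul_zero, mul_one, sum_ite_eq', mem_univ, if_true]
    split_ifs <;> ring
  simp only [hpoint, Ex_ite_eq, b₀, s₀, Function.update_self] at hδ
  have hw : 0 < (∏ i', f i' (b₀ i')) * ∏ j', g j' (s₀ j') :=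
    mul_pos (prod_pos fun i' _ => hf i' _) (prod_pos fun j' _ => hg j' _)
  linarith [(mul_eq_zero.mp hδ).resolve_left hw.ne']

end Duality

theorem stmt_4_general
    (n m : ℕ) (hn : 0 < n) (hm : 0 < m)
    (K : Fin n → ℕ) (hK : ∀ i, 0 < K i)
    (K' : Fin m → ℕ) (hK' : ∀ j, 0 < K' j)
    (vB : ∀ i, Fin (K i) → ℝ)
    (vS : ∀ j, Fin (K' j) → ℝ)
    (f : ∀ i, Fin (K i) → ℝ) (hf : ∀ i t, 0 < f i t) (hf1 : ∀ i, ∑ t, f i t = 1)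
    (g : ∀ j, Fin (K' j) → ℝ) (hg : ∀ j t, 0 < g j t) (hg1 : ∀ j, ∑ t, g j t = 1)
    (F : Set (Finset (Fin n × Fin m))) (hFne : F.Nonempty)
    (lamB : ∀ i, Fin (K i) → Option (Fin (K i)) → ℝ)
    (lamS : ∀ j, Fin (K' j) → Option (Fin (K' j)) → ℝ)
    (hlamB : ∀ i t r, 0 ≤ lamB i t r) :
    (∃ C : ℝ,
      ∀ (x : ProfileB K → ProfileS K' → Fin n × Fin m → ℝ)
        (pB : Fin n → ProfileB K → ProfileS K' → ℝ)
        (pS : Fin m → ProfileB K → ProfileS K' → ℝ),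
        Implementable F x →
        (∀ b s, ∑ i, pB i b s = ∑ j, pS j b s) →
        Lagr vB vS f g lamB lamS x pB pS ≤ C)
    ↔ (∃ α : ℝ, 0 ≤ α ∧
        (∀ (i : Fin n) (t : Fin (K i)),
          (1 / f i t) * ((∑ r : Option (Fin (K i)), lamB i t r)
            - ∑ t' : Fin (K i), lamB i t' (some t)) = α) ∧
        (∀ (j : Fin m) (t : Fin (K' j)),
          (1 / g j t) * ((∑ r : Option (Fin (K' j)), lamS j t r)
            - ∑ t' : Fin (K' j), lamS j t' (some t)) = α)) := by
  have hf0 : ∀ i t, f i t ≠ 0 := fun i t => (hf i t).ne'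
  have hg0 : ∀ j t, g j t ≠ 0 := fun j t => (hg j t).ne'
  simp only [one_div_mul_eq_div]
  constructor
  · rintro ⟨C, hC⟩
    obtain ⟨x₀, hx₀⟩ := exists_implementable (K := K) (K' := K') hFne
    have hratio := eq_of_forall_balanced_Ex_eq_zero hK hK' hf hg
      (fun i t => netOutflow (lamB i) t / f i t) (fun j t => netOutflow (lamS j) t / g j t)
      fun pB pS hbal =>
      (Lagr_zero_alloc vB vS lamB lamS hf0 hf1 hg0 hg1 pB pS).symm.trans
        (Lagr_zero_alloc_eq_zero_of_le hf0 hf1 hg0 hg1 (fun pB pS => hC x₀ pB pS hx₀) hbal)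
    let i₀ : Fin n := ⟨0, hn⟩
    let u₀ : Fin (K i₀) := ⟨0, hK i₀⟩
    let j₀ : Fin m := ⟨0, hm⟩
    let w₀ : Fin (K' j₀) := ⟨0, hK' j₀⟩
    exact ⟨_, nonneg_of_netOutflow_div_eq (fun t => hlamB i₀ t none) (hf0 i₀) (hf1 i₀)
        fun t => hratio i₀ t j₀ w₀,
      fun i t => hratio i t j₀ w₀, fun j t => (hratio i₀ u₀ j t).symm.trans (hratio i₀ u₀ j₀ w₀)⟩
  · rintro ⟨α, -, hB, hS⟩
    obtain ⟨C, hC⟩ := exists_Lagr_zero_payment_le (fun i t => (hf i t).le) (fun j t => (hg j t).le)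
      vB vS lamB lamS
    refine ⟨C, fun x pB pS hx hbal => ?_⟩
    rw [Lagr_eq_add, Lagr_zero_alloc_eq_zero hf0 hf1 hg0 hg1 hB hS hbal, add_zero]
    exact hC x hx.mem_Icc

/-- the sup of the partial Lagrangian over implementable allocations and
balanced payments is finite iff the dual variables form a flow: there is `α ≥ 0` with
`(1/f_i(b_i))·(Σ_{b'} λ^B_i(b_i,b') − Σ_{b'} λ^B_i(b',b_i)) = α` for every buyer `i` and
type `b_i`, and symmetrically for every seller. -/
theorem stmt_4
    (n m : ℕ) (hn : 0 < n) (hm : 0 < m)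
    (K : Fin n → ℕ) (hK : ∀ i, 0 < K i)
    (K' : Fin m → ℕ) (hK' : ∀ j, 0 < K' j)
    (vB : ∀ i, Fin (K i) → ℝ) (hvB : ∀ i, StrictMono (vB i))
    (vS : ∀ j, Fin (K' j) → ℝ) (hvS : ∀ j, StrictMono (vS j))
    (f : ∀ i, Fin (K i) → ℝ) (hf : ∀ i t, 0 < f i t) (hf1 : ∀ i, ∑ t, f i t = 1)
    (g : ∀ j, Fin (K' j) → ℝ) (hg : ∀ j t, 0 < g j t) (hg1 : ∀ j, ∑ t, g j t = 1)
    (F : Set (Finset (Fin n × Fin m))) (hFne : F.Nonempty)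
    (hdc : ∀ M ∈ F, ∀ M' ⊆ M, M' ∈ F)
    (hmatch : ∀ M ∈ F, ∀ e ∈ M, ∀ e' ∈ M, e ≠ e' → e.1 ≠ e'.1 ∧ e.2 ≠ e'.2)
    (lamB : ∀ i, Fin (K i) → Option (Fin (K i)) → ℝ)
    (lamS : ∀ j, Fin (K' j) → Option (Fin (K' j)) → ℝ)
    (hlamB : ∀ i t r, 0 ≤ lamB i t r) (hlamS : ∀ j t r, 0 ≤ lamS j t r) :
    (∃ C : ℝ,
      ∀ (x : ProfileB K → ProfileS K' → Fin n × Fin m → ℝ)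
        (pB : Fin n → ProfileB K → ProfileS K' → ℝ)
        (pS : Fin m → ProfileB K → ProfileS K' → ℝ),
        Implementable F x →
        (∀ b s, ∑ i, pB i b s = ∑ j, pS j b s) →
        Lagr vB vS f g lamB lamS x pB pS ≤ C)
    ↔ (∃ α : ℝ, 0 ≤ α ∧
        (∀ (i : Fin n) (t : Fin (K i)),
          (1 / f i t) * ((∑ r : Option (Fin (K i)), lamB i t r)
            - ∑ t' : Fin (K i), lamB i t' (some t)) = α) ∧
        (∀ (j : Fin m) (t : Fin (K' j)),
          (1 / g j t) * ((∑ r : Option (Fin (K' j)), lamS j t r)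
            - ∑ t' : Fin (K' j), lamS j t' (some t)) = α)) :=
  stmt_4_general n m hn hm K hK K' hK' vB vS f hf hf1 g hg hg1 F hFne lamB lamS hlamB

end Stmt4
end

section
/- Assume both the buyer distribution and the seller distribution are regular. Then for every bilateral trading mechanism M = (x, p^B, p^S) that is IR, BIC and ex-ante WBB, GFT(M) ≤ Σ_{b ∈ T^B} Σ_{s ∈ T^S} f(b)·g(s)·max(0, b + φ(b) − s − τ(s)). -/
open Finset

/-!
Each side obeys Myerson's bound. For the buyer, the downward IC constraints between adjacent
types force the interim utility of `β_l` to be at least `∑_{r<l} (β_{r+1} - β_r) X_r`, where `X`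
is the interim trade probability; by IR this chain starts at `0`, and exchanging the order of
summation turns the expected rent into the hazard-rate term of `φ`, so
`E[p^B] ≤ E[φ · x]`. The seller is a buyer for the reflected type space (costs negated, order
reversed), under which `τ` becomes `-φ`; hence `E[τ · x] ≤ E[p^S]`. Budget balance closes the
sandwich `E[τ · x] ≤ E[p^S] ≤ E[p^B] ≤ E[φ · x]`, so adding `E[(φ - τ) · x] ≥ 0` to the gains
from trade and using `x ∈ [0, 1]` pointwise gives the bound.
-/

lemma mul_le_max_zero {R : Type*} [Semiring R] [LinearOrder R] [IsOrderedRing R] {c t : R}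
    (ht : t ∈ Set.Icc (0 : R) 1) : c * t ≤ max 0 c :=
  (mul_le_mul_of_nonneg_right (le_max_right 0 c) ht.1).trans
    (mul_le_of_le_one_right (le_max_left 0 c) ht.2)

lemma sum_mul_sum_Ioi {ι R : Type*} [Fintype ι] [Preorder ι] [LocallyFiniteOrderTop ι]
    [LocallyFiniteOrderBot ι] [CommSemiring R] (w c : ι → R) :
    ∑ r, (∑ l ∈ Ioi r, w l) * c r = ∑ l, w l * ∑ r ∈ Iio l, c r := by
  simp_rw [sum_mul, mul_sum]
  exact sum_comm' (by simp)

lemma sum_Iio_le_of_step {K : ℕ} {d U : Fin K → ℝ}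
    (h0 : ∀ i : Fin K, (i : ℕ) = 0 → 0 ≤ U i)
    (hstep : ∀ i j : Fin K, (j : ℕ) = i + 1 → U i + d i ≤ U j) (l : Fin K) :
    ∑ r ∈ Iio l, d r ≤ U l := by
  obtain ⟨n, hn⟩ := l
  induction n with
  | zero =>
    have : Iio (⟨0, hn⟩ : Fin K) = ∅ := by ext r; simp [Fin.lt_def]
    simpa [this] using h0 _ rfl
  | succ m ih =>
    have hIio : Iio (⟨m + 1, hn⟩ : Fin K) = insert ⟨m, by omega⟩ (Iio ⟨m, by omega⟩) := by
      ext ⟨v, hv⟩; simp only [mem_Iio, mem_insert, Fin.mk_lt_mk, Fin.mk.injEq]; omega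
    rw [hIio, sum_insert (by simp)]
    linarith [ih (by omega), hstep ⟨m, by omega⟩ ⟨m + 1, hn⟩ rfl]

noncomputable def succGap {K : ℕ} (β : Fin K → ℝ) (r : Fin K) : ℝ :=
  (if h : (r : ℕ) + 1 < K then β ⟨(r : ℕ) + 1, h⟩ else β r) - β r

lemma succGap_of_val_eq_succ {K : ℕ} (β : Fin K → ℝ) {i j : Fin K} (hij : (j : ℕ) = i + 1) :
    succGap β i = β j - β i := by
  have hi : (i : ℕ) + 1 < K := hij ▸ j.isLt
  rw [succGap, dif_pos hi, show (⟨(i : ℕ) + 1, hi⟩ : Fin K) = j from Fin.ext hij.symm]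

lemma mul_buyerVirtual {K : ℕ} (β f : Fin K → ℝ) {r : Fin K} (hr : f r ≠ 0) :
    f r * buyerVirtual K β f r = f r * β r - (∑ l ∈ Ioi r, f l) * succGap β r := by
  unfold buyerVirtual succGap; field_simp

lemma buyerVirtual_neg_rev {K : ℕ} (α g : Fin K → ℝ) (t : Fin K) :
    buyerVirtual K (fun i => -α i.rev) (fun i => g i.rev) t = -sellerVirtual K α g t.rev := by
  obtain ⟨s, rfl⟩ := Fin.rev_surjective t
  rw [Fin.rev_rev]
  have hsum : ∑ l ∈ Ioi s.rev, g l.rev = ∑ l ∈ Iio s, g l := by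
    rw [← Fin.map_revPerm_Iio, sum_map]; simp
  unfold buyerVirtual sellerVirtual
  rw [hsum]
  by_cases hs : 0 < (s : ℕ)
  · have h : (s.rev : ℕ) + 1 < K := by simp only [Fin.val_rev]; omega
    rw [dif_pos h, if_pos hs]
    have : (⟨(s.rev : ℕ) + 1, h⟩ : Fin K).rev = ⟨(s : ℕ) - 1, by omega⟩ := by
      ext; simp only [Fin.val_rev]; omega
    simp only [this, Fin.rev_rev]; ring
  · have h : ¬ (s.rev : ℕ) + 1 < K := by simp only [Fin.val_rev]; omega
    simp only [dif_neg h, if_neg hs, Fin.rev_rev]; ring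

theorem sum_mul_le_sum_mul_buyerVirtual_mul {K : ℕ} (β f X P : Fin K → ℝ) (hf : ∀ r, 0 < f r)
    (hIC : ∀ b b', β b * X b' - P b' ≤ β b * X b - P b) (hIR : ∀ b, 0 ≤ β b * X b - P b) :
    ∑ b, f b * P b ≤ ∑ b, f b * buyerVirtual K β f b * X b := by
  have hrent (l : Fin K) : ∑ r ∈ Iio l, succGap β r * X r ≤ β l * X l - P l := by
    refine sum_Iio_le_of_step (fun i _ => hIR i) (fun i j hij => ?_) l
    rw [succGap_of_val_eq_succ β hij]
    linarith [hIC j i]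
  calc ∑ b, f b * P b = ∑ b, f b * β b * X b - ∑ b, f b * (β b * X b - P b) := by
        rw [← sum_sub_distrib]; exact sum_congr rfl fun b _ => by ring
    _ ≤ ∑ b, f b * β b * X b - ∑ b, f b * ∑ r ∈ Iio b, succGap β r * X r := by
        gcongr with b; exacts [(hf b).le, hrent b]
    _ = ∑ b, (f b * β b - (∑ l ∈ Ioi b, f l) * succGap β b) * X b := by
        rw [← sum_mul_sum_Ioi, ← sum_sub_distrib]; exact sum_congr rfl fun b _ => by ring
    _ = ∑ b, f b * buyerVirtual K β f b * X b := by
        simp only [mul_buyerVirtual β f (hf _).ne']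

theorem sum_mul_sellerVirtual_mul_le {K : ℕ} (α g X P : Fin K → ℝ) (hg : ∀ r, 0 < g r)
    (hIC : ∀ s s', P s' - α s * X s' ≤ P s - α s * X s) (hIR : ∀ s, 0 ≤ P s - α s * X s) :
    ∑ s, g s * sellerVirtual K α g s * X s ≤ ∑ s, g s * P s := by
  have h := sum_mul_le_sum_mul_buyerVirtual_mul (fun i => -α i.rev) (fun i => g i.rev)
    (fun i => X i.rev) (fun i => -P i.rev) (fun i => hg _)
    (fun b b' => by linarith [hIC b.rev b'.rev]) (fun b => by linarith [hIR b.rev])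
  rw [← Equiv.sum_comp Fin.revPerm, ← Equiv.sum_comp Fin.revPerm (fun s => g s * P s)]
  simp only [Fin.revPerm_apply, buyerVirtual_neg_rev, mul_neg, neg_mul, sum_neg_distrib] at h ⊢
  linarith

lemma gainsFromTrade_le_of_sum_virtual_le {ι κ : Type*} [Fintype ι] [Fintype κ]
    {f : ι → ℝ} {g : κ → ℝ} (hf : ∀ i, 0 ≤ f i) (hg : ∀ j, 0 ≤ g j)
    (β φ : ι → ℝ) (α τ : κ → ℝ) {x : ι → κ → ℝ} (hx : ∀ i j, x i j ∈ Set.Icc (0 : ℝ) 1)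
    (hvirt : ∑ i, ∑ j, f i * g j * τ j * x i j ≤ ∑ i, ∑ j, f i * g j * φ i * x i j) :
    ∑ i, ∑ j, f i * g j * (β i - α j) * x i j
      ≤ ∑ i, ∑ j, f i * g j * max 0 (β i + φ i - α j - τ j) :=
  calc ∑ i, ∑ j, f i * g j * (β i - α j) * x i j
      ≤ ∑ i, ∑ j, f i * g j * (β i - α j) * x i j
        + (∑ i, ∑ j, f i * g j * φ i * x i j - ∑ i, ∑ j, f i * g j * τ j * x i j) :=
        le_add_of_nonneg_right (sub_nonneg.2 hvirt)
    _ = ∑ i, ∑ j, f i * g j * ((β i + φ i - α j - τ j) * x i j) := by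
        simp only [← sum_sub_distrib, ← sum_add_distrib]
        exact sum_congr rfl fun _ _ => sum_congr rfl fun _ _ => by ring
    _ ≤ _ := sum_le_sum fun i _ => sum_le_sum fun j _ =>
        mul_le_mul_of_nonneg_left (mul_le_max_zero (hx i j)) (mul_nonneg (hf i) (hg j))

theorem stmt_6_general (K K' : ℕ)
    (β f : Fin K → ℝ) (hf : ∀ r, 0 < f r)
    (α g : Fin K' → ℝ) (hg : ∀ r, 0 < g r)
    (x pB pS : Fin K → Fin K' → ℝ)
    (hx01 : ∀ b s, x b s ∈ Set.Icc (0 : ℝ) 1)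
    (hBICb : ∀ b b' : Fin K,
      ∑ s, g s * (β b * x b' s - pB b' s) ≤ ∑ s, g s * (β b * x b s - pB b s))
    (hBICs : ∀ s s' : Fin K',
      ∑ b, f b * (pS b s' - α s * x b s') ≤ ∑ b, f b * (pS b s - α s * x b s))
    (hIRb : ∀ b : Fin K, 0 ≤ ∑ s, g s * (β b * x b s - pB b s))
    (hIRs : ∀ s : Fin K', 0 ≤ ∑ b, f b * (pS b s - α s * x b s))
    (hWBB : 0 ≤ ∑ b, ∑ s, f b * g s * (pB b s - pS b s)) :
    ∑ b, ∑ s, f b * g s * (β b - α s) * x b s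
      ≤ ∑ b, ∑ s, f b * g s *
          max 0 (β b + buyerVirtual K β f b - α s - sellerVirtual K' α g s) := by
  refine gainsFromTrade_le_of_sum_virtual_le (fun b => (hf b).le) (fun s => (hg s).le) _ _ _ _
    hx01 ?_
  simp only [mul_sub, sum_sub_distrib, mul_left_comm _ (β _), mul_left_comm _ (α _), ← mul_sum]
    at hBICb hBICs hIRb hIRs
  have hbudget : ∑ s, g s * ∑ b, f b * pS b s ≤ ∑ b, f b * ∑ s, g s * pB b s := by
    simp only [mul_sub, sum_sub_distrib, sub_nonneg] at hWBB
    rw [sum_comm] at hWBB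
    simpa only [mul_sum, mul_assoc, mul_left_comm (f _)] using hWBB
  calc ∑ b, ∑ s, f b * g s * sellerVirtual K' α g s * x b s
      = ∑ s, g s * sellerVirtual K' α g s * ∑ b, f b * x b s := by
        simp only [mul_sum]; rw [sum_comm]
        exact sum_congr rfl fun _ _ => sum_congr rfl fun _ _ => by ring
    _ ≤ ∑ s, g s * ∑ b, f b * pS b s := sum_mul_sellerVirtual_mul_le α g _ _ hg hBICs hIRs
    _ ≤ ∑ b, f b * ∑ s, g s * pB b s := hbudget
    _ ≤ ∑ b, f b * buyerVirtual K β f b * ∑ s, g s * x b s :=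
        sum_mul_le_sum_mul_buyerVirtual_mul β f _ _ hf hBICb hIRb
    _ = ∑ b, ∑ s, f b * g s * buyerVirtual K β f b * x b s := by
        simp only [mul_sum]
        exact sum_congr rfl fun _ _ => sum_congr rfl fun _ _ => by ring

/-- in bilateral trading with regular buyer and seller distributions, for any
IR, BIC, ex-ante WBB mechanism `M = (x, pB, pS)`,
`GFT(M) ≤ Σ_{b,s} f(b)g(s)·max(0, b + φ(b) − s − τ(s))`. -/
theorem stmt_6 (K K' : ℕ) (hK : 0 < K) (hK' : 0 < K')
    (β f : Fin K → ℝ) (hβ : StrictMono β) (hf : ∀ r, 0 < f r) (hf1 : ∑ r, f r = 1)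
    (α g : Fin K' → ℝ) (hα : StrictMono α) (hg : ∀ r, 0 < g r) (hg1 : ∑ r, g r = 1)
    (hregB : Monotone (buyerVirtual K β f))
    (hregS : Monotone (sellerVirtual K' α g))
    (x pB pS : Fin K → Fin K' → ℝ)
    (hx01 : ∀ b s, x b s ∈ Set.Icc (0 : ℝ) 1)
    (hBICb : ∀ b b' : Fin K,
      ∑ s, g s * (β b * x b' s - pB b' s) ≤ ∑ s, g s * (β b * x b s - pB b s))
    (hBICs : ∀ s s' : Fin K',
      ∑ b, f b * (pS b s' - α s * x b s') ≤ ∑ b, f b * (pS b s - α s * x b s))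
    (hIRb : ∀ b : Fin K, 0 ≤ ∑ s, g s * (β b * x b s - pB b s))
    (hIRs : ∀ s : Fin K', 0 ≤ ∑ b, f b * (pS b s - α s * x b s))
    (hWBB : 0 ≤ ∑ b, ∑ s, f b * g s * (pB b s - pS b s)) :
    ∑ b, ∑ s, f b * g s * (β b - α s) * x b s
      ≤ ∑ b, ∑ s, f b * g s *
          max 0 (β b + buyerVirtual K β f b - α s - sellerVirtual K' α g s) :=
  stmt_6_general K K' β f hf α g hg x pB pS hx01 hBICb hBICs hIRb hIRs hWBB
end

section
/- Let B and S be finite sets, and let F be a downward-closed family of subsets of B × S each of which is a matching (no element of B or of S appears in two pairs). Fix i₀ ∈ B, Δ ≥ 0, and weight functions w, w' : B × S → ℝ with w'(i₀, j') = w(i₀, j') + Δ for every j' ∈ S and w'(i, j') = w(i, j') for every i ≠ i₀. If M ∈ F maximizes Σ_{e ∈ M'} w(e) over all M' ∈ F and M contains a pair (i₀, j) for some j ∈ S, then M also maximizes Σ_{e ∈ M'} w'(e) over all M' ∈ F. -/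
open Finset

/-- Let `F` be a downward-closed family of matchings between finite index
sets `B` (buyers) and `S` (sellers). If raising the weight of all edges incident to a
fixed buyer `i₀` by a common amount `Δ ≥ 0` and `M ∈ F` is a maximum-weight matching
(for the old weights `w`) that matches `i₀`, then `M` is also a maximum-weight matching
for the new weights `w'`. -/
theorem stmt_8 {B S : Type} [Fintype B] [Fintype S] [DecidableEq B] [DecidableEq S]
    (F : Set (Finset (B × S)))
    (hdc : ∀ M ∈ F, ∀ M' ⊆ M, M' ∈ F)
    (hmatch : ∀ M ∈ F, ∀ e ∈ M, ∀ e' ∈ M, e ≠ e' → e.1 ≠ e'.1 ∧ e.2 ≠ e'.2)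
    (i₀ : B) (Δ : ℝ) (hΔ : 0 ≤ Δ)
    (w w' : B × S → ℝ)
    (hw₀ : ∀ j : S, w' (i₀, j) = w (i₀, j) + Δ)
    (hw₁ : ∀ i : B, i ≠ i₀ → ∀ j : S, w' (i, j) = w (i, j))
    (M : Finset (B × S)) (hM : M ∈ F)
    (hopt : ∀ M' ∈ F, ∑ e ∈ M', w e ≤ ∑ e ∈ M, w e)
    (j : S) (hij : (i₀, j) ∈ M) :
    ∀ M' ∈ F, ∑ e ∈ M', w' e ≤ ∑ e ∈ M, w' e := by
  classical
  -- key: sum under w' = sum under w + Δ * (# edges at i₀)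
  have key : ∀ M'' : Finset (B × S),
      ∑ e ∈ M'', w' e =
        ∑ e ∈ M'', w e + Δ * ((M''.filter (fun e => e.1 = i₀)).card : ℝ) := by
    intro M''
    rw [← Finset.sum_filter_add_sum_filter_not M'' (fun e => e.1 = i₀) w',
        ← Finset.sum_filter_add_sum_filter_not M'' (fun e => e.1 = i₀) w]
    have h1 : ∑ e ∈ M''.filter (fun e => e.1 = i₀), w' e
        = ∑ e ∈ M''.filter (fun e => e.1 = i₀), (w e + Δ) := by
      refine Finset.sum_congr rfl fun e he => ?_
      obtain ⟨e1, e2⟩ := e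
      have : e1 = i₀ := by simpa using (Finset.mem_filter.mp he).2
      subst this
      exact hw₀ e2
    have h2 : ∑ e ∈ M''.filter (fun e => ¬ e.1 = i₀), w' e
        = ∑ e ∈ M''.filter (fun e => ¬ e.1 = i₀), w e := by
      refine Finset.sum_congr rfl fun e he => ?_
      obtain ⟨e1, e2⟩ := e
      have : ¬ e1 = i₀ := by simpa using (Finset.mem_filter.mp he).2
      exact hw₁ e1 this e2
    rw [h1, h2, Finset.sum_add_distrib, Finset.sum_const, nsmul_eq_mul]
    ring
  have cardle : ∀ M'' ∈ F, ((M''.filter (fun e => e.1 = i₀)).card : ℝ) ≤ 1 := by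
    intro M'' hM''
    have : (M''.filter (fun e => e.1 = i₀)).card ≤ 1 := by
      refine Finset.card_le_one.mpr fun a ha b hb => ?_
      have ha' := Finset.mem_filter.mp ha
      have hb' := Finset.mem_filter.mp hb
      by_contra hne
      exact (hmatch M'' hM'' a ha'.1 b hb'.1 hne).1 (ha'.2.trans hb'.2.symm)
    exact_mod_cast this
  have cardM : ((M.filter (fun e => e.1 = i₀)).card : ℝ) = 1 := by
    have h1 : (i₀, j) ∈ M.filter (fun e => e.1 = i₀) :=
      Finset.mem_filter.mpr ⟨hij, rfl⟩
    have hle : (M.filter (fun e => e.1 = i₀)).card ≤ 1 := by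
      refine Finset.card_le_one.mpr fun a ha b hb => ?_
      have ha' := Finset.mem_filter.mp ha
      have hb' := Finset.mem_filter.mp hb
      by_contra hne
      exact (hmatch M hM a ha'.1 b hb'.1 hne).1 (ha'.2.trans hb'.2.symm)
    have hge : 1 ≤ (M.filter (fun e => e.1 = i₀)).card :=
      Finset.card_pos.mpr ⟨_, h1⟩
    exact_mod_cast le_antisymm hle hge
  intro M' hM'
  rw [key M', key M, cardM, mul_one]
  have := hopt M' hM'
  have h2 : Δ * ((M'.filter (fun e => e.1 = i₀)).card : ℝ) ≤ Δ :=
    le_trans (mul_le_mul_of_nonneg_left (cardle M' hM') hΔ) (by linarith)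
  linarith
end
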